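/- arXiv:2304.11338 — 4 statements merged into one kernel-verified Lean document; each statement's English description precedes it below -/
import Mathlib

section
/- Let q : ℝ → ℝⁿ be a C² curve satisfying the constraints. Let φ_ν : ℝⁿ × ℝⁿ × ℝ → ℝ (ν = 1,…,k) be C¹ and suppose that at every time t, with u = û(q(t),v(t),t), the implicit-differentiation relations ∂φ_ν/∂u_r + ∑_{μ=1}^k (∂φ_ν/∂u_{m+μ})(∂α_μ/∂v_r) = 0 hold for all r = 1,…,m and all ν. Suppose there are C⁰ multipliers λ₁,…,λ_k : ℝ → ℝ such that for every i = 1,…,n along the curve d/dt[(∂L/∂u_i)(q,û,t)] − (∂L/∂q_i)(q,û,t) = ∑_{ν=1}^k λ_ν(t) (∂φ_ν/∂u_i)(q,û,t). Then the power of the constraint reactions R⁽ⁱ⁾ = ∑_{ν=1}^k λ_ν ∂φ_ν/∂u_i satisfies, at every time t, ∑_{i=1}^n R⁽ⁱ⁾ q̇_i = ∑_{ν=1}^k (α_ν − ᾱ_ν)·(d/dt[(∂L/∂u_{m+ν})(q,û,t)] − (∂L/∂q_{m+ν})(q,û,t)), where α_ν and ᾱ_ν are evaluated at (q(t),v(t),t).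 -/
open scoped BigOperators
noncomputable section
namespace NH

/-- The phase point `(q, v, t)` with `q : ℝⁿ` (n = m+k) and independent velocities `v : ℝᵐ`. -/
abbrev Pt (m k : ℕ) : Type := (Fin (m+k) → ℝ) × (Fin m → ℝ) × ℝ

/-- The full phase point `(q, u, t)` with all velocities `u : ℝⁿ`. -/
abbrev PtL (m k : ℕ) : Type := (Fin (m+k) → ℝ) × (Fin (m+k) → ℝ) × ℝ

/-- Partial derivative of `f (q, w, t)` with respect to `q_i`. -/
def pq {n m' : ℕ} (f : (Fin n → ℝ) × (Fin m' → ℝ) × ℝ → ℝ) (i : Fin n)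
    (x : (Fin n → ℝ) × (Fin m' → ℝ) × ℝ) : ℝ :=
  fderiv ℝ f x (Pi.single i 1, 0, 0)

/-- Partial derivative of `f (q, w, t)` with respect to the velocity variable `w_j`. -/
def pv {n m' : ℕ} (f : (Fin n → ℝ) × (Fin m' → ℝ) × ℝ → ℝ) (j : Fin m')
    (x : (Fin n → ℝ) × (Fin m' → ℝ) × ℝ) : ℝ :=
  fderiv ℝ f x (0, Pi.single j 1, 0)

/-- Partial derivative of `f (q, w, t)` with respect to time `t`. -/
def pt {n m' : ℕ} (f : (Fin n → ℝ) × (Fin m' → ℝ) × ℝ → ℝ)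
    (x : (Fin n → ℝ) × (Fin m' → ℝ) × ℝ) : ℝ :=
  fderiv ℝ f x (0, 0, 1)

/-- Partial derivative of `U (q, t)` with respect to `q_i`. -/
def pUq {n : ℕ} (U : (Fin n → ℝ) × ℝ → ℝ) (i : Fin n) (x : (Fin n → ℝ) × ℝ) : ℝ :=
  fderiv ℝ U x (Pi.single i 1, 0)

/-- Partial derivative of `U (q, t)` with respect to `t`. -/
def pUt {n : ℕ} (U : (Fin n → ℝ) × ℝ → ℝ) (x : (Fin n → ℝ) × ℝ) : ℝ :=
  fderiv ℝ U x (0, 1)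

variable {m k : ℕ}

/-- `û(q,v,t) = (v₁,…,vₘ, α₁(q,v,t),…,α_k(q,v,t))`. -/
def uhat (α : Fin k → Pt m k → ℝ) (x : Pt m k) : Fin (m+k) → ℝ :=
  Fin.append x.2.1 (fun ν => α ν x)

/-- The full phase point `(q, û(q,v,t), t)` associated to `(q,v,t)`. -/
def Lpt (α : Fin k → Pt m k → ℝ) (x : Pt m k) : PtL m k :=
  (x.1, uhat α x, x.2.2)

/-- The restricted Lagrangian `L*(q,v,t) = L(q, û(q,v,t), t)`. -/
def Lstar (L : PtL m k → ℝ) (α : Fin k → Pt m k → ℝ) (x : Pt m k) : ℝ :=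
  L (Lpt α x)

/-- `ᾱ_ν(q,v,t) = ∑_r v_r ∂α_ν/∂v_r`. -/
def abar (α : Fin k → Pt m k → ℝ) (ν : Fin k) (x : Pt m k) : ℝ :=
  ∑ r : Fin m, x.2.1 r * pv (α ν) r x

/-- The restricted energy `E*(q,v,t) = ∑_r v_r ∂L*/∂v_r − L*`. -/
def Estar (L : PtL m k → ℝ) (α : Fin k → Pt m k → ℝ) (x : Pt m k) : ℝ :=
  ∑ r : Fin m, x.2.1 r * pv (Lstar L α) r x - Lstar L α x

/-- The energy `E(q,v,t) = ∑_i û_i (∂L/∂u_i)(q,û,t) − L*(q,v,t)`. -/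
def En (L : PtL m k → ℝ) (α : Fin k → Pt m k → ℝ) (x : Pt m k) : ℝ :=
  ∑ i : Fin (m+k), uhat α x i * pv L i (Lpt α x) - Lstar L α x

/-- `q̇_i(t)`. -/
def qdot {n : ℕ} (q : ℝ → Fin n → ℝ) (t : ℝ) (i : Fin n) : ℝ :=
  deriv (fun s => q s i) t

/-- The independent velocities `v(t) = (q̇₁,…,q̇ₘ)` along a curve. -/
def vel (m k : ℕ) (q : ℝ → Fin (m+k) → ℝ) (t : ℝ) (r : Fin m) : ℝ :=
  qdot q t (Fin.castAdd k r)

/-- The point `(q(t), v(t), t)` along a curve. -/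
def along (m k : ℕ) (q : ℝ → Fin (m+k) → ℝ) (t : ℝ) : Pt m k :=
  (q t, vel m k q t, t)

/-- The curve satisfies the nonholonomic constraints: `q̇_{m+ν} = α_ν(q, v, t)`. -/
def Constrained (α : Fin k → Pt m k → ℝ) (q : ℝ → Fin (m+k) → ℝ) : Prop :=
  ∀ (t : ℝ) (ν : Fin k), qdot q t (Fin.natAdd m ν) = α ν (along m k q t)

/-- The Voronec coefficients `B_rν(t)` along a constrained curve. -/
def Bco (α : Fin k → Pt m k → ℝ) (q : ℝ → Fin (m+k) → ℝ) (r : Fin m) (ν : Fin k) (t : ℝ) : ℝ :=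
  deriv (fun s => pv (α ν) r (along m k q s)) t
    - pq (α ν) (Fin.castAdd k r) (along m k q t)
    - ∑ μ : Fin k, pv (α μ) r (along m k q t) * pq (α ν) (Fin.natAdd m μ) (along m k q t)

/-- The Voronec equations of motion along a constrained curve. -/
def Voronec (L : PtL m k → ℝ) (α : Fin k → Pt m k → ℝ) (q : ℝ → Fin (m+k) → ℝ) : Prop :=
  ∀ (r : Fin m) (t : ℝ),
    deriv (fun s => pv (Lstar L α) r (along m k q s)) t
      - pq (Lstar L α) (Fin.castAdd k r) (along m k q t)
      - ∑ ν : Fin k, pq (Lstar L α) (Fin.natAdd m ν) (along m k q t) * pv (α ν) r (along m k q t)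
      - ∑ ν : Fin k, Bco α q r ν t * pv L (Fin.natAdd m ν) (Lpt α (along m k q t)) = 0

lemma power_key {m k : ℕ} (lam : Fin k → ℝ) (Q : Fin k → Fin m → ℝ)
    (P : Fin k → Fin k → ℝ) (a : Fin k → Fin m → ℝ) (v : Fin m → ℝ) (A : Fin k → ℝ)
    (hrel : ∀ ν r, Q ν r + ∑ μ, P ν μ * a μ r = 0) :
    ∑ r, (∑ ν, lam ν * Q ν r) * v r + ∑ μ, (∑ ν, lam ν * P ν μ) * A μ
      = ∑ ν, (A ν - ∑ r, v r * a ν r) * (∑ μ, lam μ * P μ ν) := by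
  have hQ : ∀ ν r, Q ν r = -∑ μ, P ν μ * a μ r := by
    intro ν r; have := hrel ν r; linarith
  have h1 : ∑ r, (∑ ν, lam ν * Q ν r) * v r
      = -∑ μ, (∑ r, v r * a μ r) * (∑ ν, lam ν * P ν μ) := by
    calc ∑ r, (∑ ν, lam ν * Q ν r) * v r
        = ∑ r, ∑ ν, ∑ μ, -(v r * a μ r * (lam ν * P ν μ)) := by
          refine Finset.sum_congr rfl fun r _ => ?_
          rw [Finset.sum_mul]
          refine Finset.sum_congr rfl fun ν _ => ?_
          rw [hQ ν r, mul_neg, neg_mul, Finset.mul_sum, Finset.sum_mul,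
            ← Finset.sum_neg_distrib]
          exact Finset.sum_congr rfl fun μ _ => by ring
      _ = ∑ μ, ∑ ν, ∑ r, -(v r * a μ r * (lam ν * P ν μ)) := by
          refine (Finset.sum_congr rfl fun r _ => by rw [Finset.sum_comm]).trans ?_
          rw [Finset.sum_comm]
          exact Finset.sum_congr rfl fun μ _ => by rw [Finset.sum_comm]
      _ = -∑ μ, (∑ r, v r * a μ r) * (∑ ν, lam ν * P ν μ) := by
          rw [← Finset.sum_neg_distrib]
          refine Finset.sum_congr rfl fun μ _ => ?_
          rw [Finset.sum_mul_sum, ← Finset.sum_neg_distrib, Finset.sum_comm]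
          refine Finset.sum_congr rfl fun ν _ => ?_
          rw [← Finset.sum_neg_distrib]
  rw [h1]
  have hY : ∑ μ, (∑ ν, lam ν * P ν μ) * A μ = ∑ ν, A ν * ∑ μ, lam μ * P μ ν :=
    Finset.sum_congr rfl fun μ _ => by ring
  simp only [sub_mul, Finset.sum_sub_distrib, hY]
  ring

theorem constraint_reaction_power (m k : ℕ) (hm : 0 < m) (hk : 0 < k)
    (L : PtL m k → ℝ) (hL : ContDiff ℝ 2 L)
    (α : Fin k → Pt m k → ℝ) (hα : ∀ ν, ContDiff ℝ 2 (α ν))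
    (q : ℝ → Fin (m+k) → ℝ) (hq : ContDiff ℝ 2 q)
    (hcon : Constrained α q)
    (φ : Fin k → PtL m k → ℝ) (hφ : ∀ ν, ContDiff ℝ 1 (φ ν))
    (hrel : ∀ (t : ℝ) (ν : Fin k) (r : Fin m),
      pv (φ ν) (Fin.castAdd k r) (Lpt α (along m k q t))
        + ∑ μ : Fin k, pv (φ ν) (Fin.natAdd m μ) (Lpt α (along m k q t))
            * pv (α μ) r (along m k q t) = 0)
    (lam : Fin k → ℝ → ℝ) (hlam : ∀ ν, Continuous (lam ν))
    (hEL : ∀ (i : Fin (m+k)) (t : ℝ),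
      deriv (fun s => pv L i (Lpt α (along m k q s))) t
        - pq L i (Lpt α (along m k q t))
        = ∑ ν : Fin k, lam ν t * pv (φ ν) i (Lpt α (along m k q t))) :
    ∀ t : ℝ,
      ∑ i : Fin (m+k),
          (∑ ν : Fin k, lam ν t * pv (φ ν) i (Lpt α (along m k q t))) * qdot q t i
        = ∑ ν : Fin k,
            (α ν (along m k q t) - abar α ν (along m k q t))
              * (deriv (fun s => pv L (Fin.natAdd m ν) (Lpt α (along m k q s))) t
                 - pq L (Fin.natAdd m ν) (Lpt α (along m k q t))) := by
  intro t
  rw [Fin.sum_univ_add]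
  simp only [hcon t, hEL, abar]
  exact power_key (fun ν => lam ν t)
    (fun ν r => pv (φ ν) (Fin.castAdd k r) (Lpt α (along m k q t)))
    (fun ν μ => pv (φ ν) (Fin.natAdd m μ) (Lpt α (along m k q t)))
    (fun μ r => pv (α μ) r (along m k q t))
    (fun r => (along m k q t).2.1 r)
    (fun ν => α ν (along m k q t))
    (fun ν r => hrel t ν r)

end NH
end
end

section
/- Let q : ℝ → ℝⁿ be a C² curve satisfying the constraints and solving the Voronec equations. Then at every time t, d/dt[E*(q(t),v(t),t)] = −(∂L*/∂t)(q,v,t) + ∑_{ν=1}^k (ᾱ_ν − α_ν)(q,v,t)·(∂L*/∂q_{m+ν})(q,v,t) + ∑_{ν=1}^k B̄_ν(t)·(∂L/∂u_{m+ν})(q, û(q,v,t), t), where all functions are evaluated along the curve. -/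
open scoped BigOperators
noncomputable section
namespace NH

variable {m k : ℕ}

/-! Along the curve, `d/dt E* = ∑ (v̇_r ∂L*/∂v_r + v_r d/dt ∂L*/∂v_r) − d/dt L*`, and the chain rule
for `L*` contributes the same terms `v̇_r ∂L*/∂v_r`, which cancel. By the constraints the
`q_{m+ν}`-part of the chain rule is `α_ν ∂L*/∂q_{m+ν}`, so what is left is
`∑ v_r (d/dt ∂L*/∂v_r − ∂L*/∂q_r) − ∑ α_ν ∂L*/∂q_{m+ν} − ∂L*/∂t`. The Voronec equations rewrite
each bracket, and exchanging the sums over `r` and `ν` produces `ᾱ_ν` and `B̄_ν`. -/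

theorem clm_apply_eq_sum_partials {n m' : ℕ} (φ : ((Fin n → ℝ) × (Fin m' → ℝ) × ℝ) →L[ℝ] ℝ)
    (a : Fin n → ℝ) (b : Fin m' → ℝ) (c : ℝ) :
    φ (a, b, c) = ∑ i, a i * φ (Pi.single i 1, 0, 0)
      + ∑ j, b j * φ (0, Pi.single j 1, 0) + c * φ (0, 0, 1) := by
  have h : (a, b, c) = ∑ i, a i • ((Pi.single i 1 : Fin n → ℝ), (0 : Fin m' → ℝ), (0 : ℝ))
      + ∑ j, b j • ((0 : Fin n → ℝ), (Pi.single j 1 : Fin m' → ℝ), (0 : ℝ))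
      + c • ((0 : Fin n → ℝ), (0 : Fin m' → ℝ), (1 : ℝ)) := by
    refine Prod.ext ?_ (Prod.ext ?_ ?_) <;>
      simp [Prod.fst_sum, Prod.snd_sum, ← Pi.single_smul, Finset.univ_sum_single]
  simp only [h, map_add, map_sum, map_smul, smul_eq_mul]

theorem hasDerivAt_comp_partials {n m' : ℕ} {f : (Fin n → ℝ) × (Fin m' → ℝ) × ℝ → ℝ}
    {γ : ℝ → (Fin n → ℝ) × (Fin m' → ℝ) × ℝ} {a : Fin n → ℝ} {b : Fin m' → ℝ} {c t : ℝ}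
    (hγ : HasDerivAt γ (a, b, c) t) (hf : DifferentiableAt ℝ f (γ t)) :
    HasDerivAt (fun s => f (γ s))
      (∑ i, a i * pq f i (γ t) + ∑ j, b j * pv f j (γ t) + c * pt f (γ t)) t := by
  have h := hf.hasFDerivAt.comp_hasDerivAt t hγ
  rwa [clm_apply_eq_sum_partials] at h

theorem contDiff_pv {n m' : ℕ} {f : (Fin n → ℝ) × (Fin m' → ℝ) × ℝ → ℝ}
    (hf : ContDiff ℝ 2 f) (j : Fin m') : ContDiff ℝ 1 (pv f j) :=
  (hf.fderiv_right (by norm_num)).clm_apply contDiff_const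

theorem hasDerivAt_qdot {n : ℕ} {q : ℝ → Fin n → ℝ} {t : ℝ} (hq : DifferentiableAt ℝ q t) :
    HasDerivAt q (qdot q t) t :=
  hasDerivAt_pi.2 fun i => (differentiableAt_pi.1 hq i).hasDerivAt

theorem contDiff_qdot {n : ℕ} {q : ℝ → Fin n → ℝ} (hq : ContDiff ℝ 2 q) (i : Fin n) :
    ContDiff ℝ 1 (fun s => qdot q s i) := by
  have h := contDiff_pi.1 hq i
  rw [show (2 : WithTop ℕ∞) = 1 + 1 by norm_num, contDiff_succ_iff_deriv] at h
  exact h.2.2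

theorem contDiff_vel {q : ℝ → Fin (m+k) → ℝ} (hq : ContDiff ℝ 2 q) :
    ContDiff ℝ 1 (vel m k q) :=
  contDiff_pi.2 fun r => contDiff_qdot hq (Fin.castAdd k r)

theorem contDiff_along {q : ℝ → Fin (m+k) → ℝ} (hq : ContDiff ℝ 2 q) :
    ContDiff ℝ 1 (along m k q) :=
  (hq.of_le (by norm_num)).prodMk ((contDiff_vel hq).prodMk contDiff_id)

theorem hasDerivAt_along {q : ℝ → Fin (m+k) → ℝ} (hq : ContDiff ℝ 2 q) (t : ℝ) :
    HasDerivAt (along m k q) (qdot q t, deriv (vel m k q) t, 1) t :=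
  (hasDerivAt_qdot ((hq.differentiable (by norm_num)) t)).prodMk
    ((((contDiff_vel hq).differentiable one_ne_zero) t).hasDerivAt.prodMk (hasDerivAt_id t))

theorem contDiff_uhat {α : Fin k → Pt m k → ℝ} (hα : ∀ ν, ContDiff ℝ 2 (α ν)) :
    ContDiff ℝ 2 (uhat α) := by
  refine contDiff_pi.2 fun i => Fin.addCases (fun r => ?_) (fun ν => ?_) i
  · simp only [uhat, Fin.append_left]
    exact (contDiff_apply ℝ ℝ r).comp (contDiff_fst.comp contDiff_snd)
  · simpa only [uhat, Fin.append_right] using hα ν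

theorem contDiff_Lstar {L : PtL m k → ℝ} (hL : ContDiff ℝ 2 L)
    {α : Fin k → Pt m k → ℝ} (hα : ∀ ν, ContDiff ℝ 2 (α ν)) :
    ContDiff ℝ 2 (Lstar L α) :=
  hL.comp (contDiff_fst.prodMk ((contDiff_uhat hα).prodMk (contDiff_snd.comp contDiff_snd)))

theorem Constrained.hasDerivAt_comp_along {α : Fin k → Pt m k → ℝ} {q : ℝ → Fin (m+k) → ℝ}
    (hcon : Constrained α q) (hq : ContDiff ℝ 2 q) {f : Pt m k → ℝ} {t : ℝ}
    (hf : DifferentiableAt ℝ f (along m k q t)) :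
    HasDerivAt (fun s => f (along m k q s))
      (∑ r, vel m k q t r * pq f (Fin.castAdd k r) (along m k q t)
        + ∑ ν, α ν (along m k q t) * pq f (Fin.natAdd m ν) (along m k q t)
        + ∑ r, deriv (vel m k q) t r * pv f r (along m k q t) + pt f (along m k q t)) t := by
  have h := hasDerivAt_comp_partials (hasDerivAt_along hq t) hf
  simp only [Fin.sum_univ_add, hcon t, one_mul] at h
  exact h

theorem Constrained.hasDerivAt_Estar_along {L : PtL m k → ℝ} {α : Fin k → Pt m k → ℝ}
    {q : ℝ → Fin (m+k) → ℝ} (hcon : Constrained α q) (hq : ContDiff ℝ 2 q)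
    (hLs : ContDiff ℝ 2 (Lstar L α)) (t : ℝ) :
    HasDerivAt (fun s => Estar L α (along m k q s))
      (∑ r, vel m k q t r * (deriv (fun s => pv (Lstar L α) r (along m k q s)) t
            - pq (Lstar L α) (Fin.castAdd k r) (along m k q t))
        - ∑ ν, α ν (along m k q t) * pq (Lstar L α) (Fin.natAdd m ν) (along m k q t)
        - pt (Lstar L α) (along m k q t)) t := by
  have hv : HasDerivAt (vel m k q) (deriv (vel m k q) t) t :=
    ((contDiff_vel hq).differentiable one_ne_zero t).hasDerivAt
  have hg (r : Fin m) : HasDerivAt (fun s => pv (Lstar L α) r (along m k q s))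
      (deriv (fun s => pv (Lstar L α) r (along m k q s)) t) t :=
    (((contDiff_pv hLs r).comp (contDiff_along hq)).differentiable one_ne_zero t).hasDerivAt
  have hLstar := hcon.hasDerivAt_comp_along hq (hLs.differentiable (by norm_num) (along m k q t))
  refine ((HasDerivAt.fun_sum (u := Finset.univ) fun r _ =>
    (hasDerivAt_pi.1 hv r).mul (hg r)).sub hLstar).congr_deriv ?_
  simp only [mul_sub, Finset.sum_sub_distrib, Finset.sum_add_distrib]
  ring

theorem sum_mul_sum_add_sum_comm {ι κ : Type*} [Fintype ι] [Fintype κ] (v : ι → ℝ) (Q P : κ → ℝ)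
    (C B : ι → κ → ℝ) :
    ∑ r, v r * (∑ ν, Q ν * C r ν + ∑ ν, B r ν * P ν)
      = ∑ ν, (∑ r, v r * C r ν) * Q ν + ∑ ν, (∑ r, B r ν * v r) * P ν := by
  simp only [mul_add, Finset.sum_add_distrib, Finset.mul_sum, Finset.sum_mul]
  rw [Finset.sum_comm, Finset.sum_comm (γ := ι)]
  congr 1 <;> exact Finset.sum_congr rfl fun _ _ => Finset.sum_congr rfl fun _ _ => by ring

theorem energy_balance_Voronec_general (m k : ℕ)
    (L : PtL m k → ℝ) (hL : ContDiff ℝ 2 L)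
    (α : Fin k → Pt m k → ℝ) (hα : ∀ ν, ContDiff ℝ 2 (α ν))
    (q : ℝ → Fin (m+k) → ℝ) (hq : ContDiff ℝ 2 q)
    (hcon : Constrained α q)
    (hV : Voronec L α q) :
    ∀ t : ℝ,
      deriv (fun s => Estar L α (along m k q s)) t
        = - pt (Lstar L α) (along m k q t)
          + ∑ ν : Fin k,
              (abar α ν (along m k q t) - α ν (along m k q t))
                * pq (Lstar L α) (Fin.natAdd m ν) (along m k q t)
          + ∑ ν : Fin k,
              (∑ r : Fin m, Bco α q r ν t * vel m k q t r)
                * pv L (Fin.natAdd m ν) (Lpt α (along m k q t)) := by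
  intro t
  have hVor (r : Fin m) : deriv (fun s => pv (Lstar L α) r (along m k q s)) t
        - pq (Lstar L α) (Fin.castAdd k r) (along m k q t)
      = ∑ ν, pq (Lstar L α) (Fin.natAdd m ν) (along m k q t) * pv (α ν) r (along m k q t)
        + ∑ ν, Bco α q r ν t * pv L (Fin.natAdd m ν) (Lpt α (along m k q t)) := by
    linarith [hV r t]
  rw [(hcon.hasDerivAt_Estar_along hq (contDiff_Lstar hL hα) t).deriv]
  have habar (ν : Fin k) :
      abar α ν (along m k q t) = ∑ r, vel m k q t r * pv (α ν) r (along m k q t) := rfl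
  simp only [hVor, sum_mul_sum_add_sum_comm, habar, sub_mul, Finset.sum_sub_distrib]
  ring

theorem energy_balance_Voronec (m k : ℕ) (hm : 0 < m) (hk : 0 < k)
    (L : PtL m k → ℝ) (hL : ContDiff ℝ 2 L)
    (α : Fin k → Pt m k → ℝ) (hα : ∀ ν, ContDiff ℝ 2 (α ν))
    (q : ℝ → Fin (m+k) → ℝ) (hq : ContDiff ℝ 2 q)
    (hcon : Constrained α q)
    (hV : Voronec L α q) :
    ∀ t : ℝ,
      deriv (fun s => Estar L α (along m k q s)) t
        = - pt (Lstar L α) (along m k q t)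
          + ∑ ν : Fin k,
              (abar α ν (along m k q t) - α ν (along m k q t))
                * pq (Lstar L α) (Fin.natAdd m ν) (along m k q t)
          + ∑ ν : Fin k,
              (∑ r : Fin m, Bco α q r ν t * vel m k q t r)
                * pv L (Fin.natAdd m ν) (Lpt α (along m k q t)) :=
  energy_balance_Voronec_general m k L hL α hα q hq hcon hV

end NH
end
end

section
/- For all (q, v, t) ∈ ℝⁿ × ℝᵐ × ℝ, the two energy functions satisfy E*(q,v,t) = E(q,v,t) + ∑_{ν=1}^k (ᾱ_ν(q,v,t) − α_ν(q,v,t))·(∂L/∂u_{m+ν})(q, û(q,v,t), t). -/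
open scoped BigOperators
noncomputable section
namespace NH

variable {m k : ℕ}

/-
For any `f (q, w, t)`, the Euler-type sum `∑ⱼ wⱼ ∂f/∂wⱼ` is the derivative of `f` in the
direction `(0, w, 0)`. In that direction `û` has derivative `(v, ᾱ)`, so by the chain rule
`∑ᵣ vᵣ ∂L*/∂vᵣ = ∑ᵣ vᵣ ∂L/∂uᵣ + ∑_ν ᾱ_ν ∂L/∂u_{m+ν}`, while the sum in `E` is the same
expression with `α` in place of `ᾱ`.
-/

theorem sum_mul_pv_eq_fderiv {n m' : ℕ} (f : (Fin n → ℝ) × (Fin m' → ℝ) × ℝ → ℝ)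
    (x : (Fin n → ℝ) × (Fin m' → ℝ) × ℝ) (w : Fin m' → ℝ) :
    ∑ j, w j * pv f j x = fderiv ℝ f x (0, w, 0) := by
  classical
  have hw : ((0 : Fin n → ℝ), w, (0 : ℝ))
      = ∑ j, w j • ((0 : Fin n → ℝ), (Pi.single j 1 : Fin m' → ℝ), (0 : ℝ)) := by
    conv_lhs => rw [pi_eq_sum_univ' w]
    ext <;> simp [Prod.fst_sum, Prod.snd_sum]
  rw [hw, map_sum]
  simp only [map_smul, smul_eq_mul, pv]

section Constraints

variable {α : Fin k → Pt m k → ℝ} {x : Pt m k}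

theorem differentiableAt_uhat (hα : ∀ ν, DifferentiableAt ℝ (α ν) x) :
    DifferentiableAt ℝ (uhat α) x := by
  refine differentiableAt_pi.2 (Fin.addCases (fun j => ?_) (fun ν => ?_))
  · simp only [uhat, Fin.append_left]; fun_prop
  · simpa only [uhat, Fin.append_right] using hα ν

theorem fderiv_uhat_apply (hα : ∀ ν, DifferentiableAt ℝ (α ν) x) (w : Fin m → ℝ) :
    fderiv ℝ (uhat α) x (0, w, 0) = Fin.append w (fun ν => fderiv ℝ (α ν) x (0, w, 0)) := by
  rw [show uhat α = fun y i => uhat α y i from rfl,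
    fderiv_pi (differentiableAt_pi.1 (differentiableAt_uhat hα))]
  ext i
  refine Fin.addCases (fun j => ?_) (fun ν => ?_) i
  · simp only [ContinuousLinearMap.pi_apply, uhat, Fin.append_left]
    exact DFunLike.congr_fun ((ContinuousLinearMap.proj j).comp
      ((ContinuousLinearMap.fst ℝ (Fin m → ℝ) ℝ).comp
        (ContinuousLinearMap.snd ℝ (Fin (m + k) → ℝ) _))).fderiv (0, w, 0)
  · simp [uhat]

theorem fderiv_Lstar_apply {L : PtL m k → ℝ} (hL : DifferentiableAt ℝ L (Lpt α x))
    (hα : ∀ ν, DifferentiableAt ℝ (α ν) x) (w : Fin m → ℝ) :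
    fderiv ℝ (Lstar L α) x (0, w, 0)
      = fderiv ℝ L (Lpt α x) (0, Fin.append w (fun ν => fderiv ℝ (α ν) x (0, w, 0)), 0) := by
  have hLpt : HasFDerivAt (Lpt α) ((ContinuousLinearMap.fst ℝ _ _).prod
      ((fderiv ℝ (uhat α) x).prod
        ((ContinuousLinearMap.snd ℝ _ _).comp (ContinuousLinearMap.snd ℝ _ _)))) x :=
    hasFDerivAt_fst.prodMk ((differentiableAt_uhat hα).hasFDerivAt.prodMk hasFDerivAt_snd.snd)
  rw [show Lstar L α = L ∘ Lpt α from rfl, (hL.hasFDerivAt.comp x hLpt).fderiv]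
  simp [fderiv_uhat_apply hα]

end Constraints

theorem energy_comparison_general (m k : ℕ)
    (L : PtL m k → ℝ) (hL : ContDiff ℝ 2 L)
    (α : Fin k → Pt m k → ℝ) (hα : ∀ ν, ContDiff ℝ 2 (α ν))
 :
    ∀ x : Pt m k,
      Estar L α x
        = En L α x
          + ∑ ν : Fin k, (abar α ν x - α ν x) * pv L (Fin.natAdd m ν) (Lpt α x) := by
  intro x
  have hα' : ∀ ν, DifferentiableAt ℝ (α ν) x :=
    fun ν => (hα ν).differentiable two_ne_zero x
  have hEstar : Estar L α x
      = ∑ i, Fin.append x.2.1 (fun ν => abar α ν x) i * pv L i (Lpt α x) - Lstar L α x := by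
    rw [Estar, sum_mul_pv_eq_fderiv,
      fderiv_Lstar_apply (hL.differentiable two_ne_zero _) hα', sum_mul_pv_eq_fderiv]
    simp only [abar, sum_mul_pv_eq_fderiv]
  rw [hEstar, En, uhat, Fin.sum_univ_add, Fin.sum_univ_add]
  simp only [Fin.append_left, Fin.append_right, sub_mul, Finset.sum_sub_distrib]
  ring

theorem energy_comparison (m k : ℕ) (hm : 0 < m) (hk : 0 < k)
    (L : PtL m k → ℝ) (hL : ContDiff ℝ 2 L)
    (α : Fin k → Pt m k → ℝ) (hα : ∀ ν, ContDiff ℝ 2 (α ν))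
 :
    ∀ x : Pt m k,
      Estar L α x
        = En L α x
          + ∑ ν : Fin k, (abar α ν x - α ν x) * pv L (Fin.natAdd m ν) (Lpt α x) :=
  energy_comparison_general m k L hL α hα

end NH
end
end

section
/- Let the kinetic energy be T(u) = ½∑_{i=1}^n M_i u_i² with constants M_i > 0, let F_i : ℝⁿ × ℝ → ℝ (i = 1,…,n) be the generalized force components, and set T*(q,v,t) = ½∑_{r=1}^m M_r v_r² + ½∑_{ν=1}^k M_{m+ν} α_ν(q,v,t)². A C² curve q : ℝ → ℝⁿ satisfying the constraints solves the Voronec equations with forces (i.e., for each r = 1,…,m: d/dt[∂T*/∂v_r] − ∂T*/∂q_r − ∑_{ν=1}^k (∂T*/∂q_{m+ν})(∂α_ν/∂v_r) − ∑_{ν=1}^k B_rν (∂T/∂u_{m+ν})(û) = F_r + ∑_{ν=1}^k (∂α_ν/∂v_r) F_{m+ν} along the curve) if and only if for each r = 1,…,m and all t: M_r q̈_r + ∑_{ν=1}^k M_{m+ν} (∂α_ν/∂v_r)(q,v,t)·d/dt[α_ν(q(t),v(t),t)] = F_r(q,t) + ∑_{ν=1}^k (∂α_ν/∂v_r)(q,v,t)·F_{m+ν}(q,t).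 -/
open scoped BigOperators
noncomputable section
namespace NH

variable {m k : ℕ}

/-!
For point masses, `∂T*/∂v_r = M_r v_r + ∑_ν M_{m+ν} α_ν ∂α_ν/∂v_r`,
`∂T*/∂q_i = ∑_ν M_{m+ν} α_ν ∂α_ν/∂q_i` and `(∂T/∂u_{m+ν})(û) = M_{m+ν} α_ν`.
Substituted into the left-hand side of the Voronec equations, the `B_rν`-terms cancel the terms
`α_ν d/dt(∂α_ν/∂v_r)`, the terms `α_ν ∂α_ν/∂q_r` and, after exchanging the two summation indices,
the double sum coming from `∂T*/∂q_{m+ν}`. What is left is `M_r q̈_r + ∑_ν M_{m+ν} (∂α_ν/∂v_r) α̇_ν`,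
so the two systems of equations have the same left-hand sides.
-/

theorem fderiv_half_sum_sq_apply {E ι : Type*} [NormedAddCommGroup E] [NormedSpace ℝ E]
    [Fintype ι] (c : ι → ℝ) {g : ι → E → ℝ} {x : E} (hg : ∀ i, DifferentiableAt ℝ (g i) x)
    (h : E) :
    fderiv ℝ (fun y => (1/2) * ∑ i, c i * g i y ^ 2) x h
      = ∑ i, c i * (g i x * fderiv ℝ (g i) x h) := by
  have hd := (HasFDerivAt.fun_sum (u := Finset.univ) fun i _ =>
    ((hg i).hasFDerivAt.pow 2).const_mul (c i)).const_mul (1/2 : ℝ)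
  rw [hd.fderiv]
  simp only [smul_apply, sum_apply, smul_eq_mul, Finset.mul_sum]
  refine Finset.sum_congr rfl fun i _ => ?_
  simp only [nsmul_eq_mul]
  push_cast
  ring

theorem fderiv_velocity_apply {n m' : ℕ} (j : Fin m') (x h : (Fin n → ℝ) × (Fin m' → ℝ) × ℝ) :
    fderiv ℝ (fun y : (Fin n → ℝ) × (Fin m' → ℝ) × ℝ => y.2.1 j) x h = h.2.1 j :=
  DFunLike.congr_fun ((ContinuousLinearMap.proj j).comp ((ContinuousLinearMap.fst ℝ _ ℝ).comp
    (ContinuousLinearMap.snd ℝ (Fin n → ℝ) ((Fin m' → ℝ) × ℝ)))).fderiv h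

def kineticEnergy {n n' : ℕ} (M : Fin n' → ℝ) (x : (Fin n → ℝ) × (Fin n' → ℝ) × ℝ) : ℝ :=
  (1/2) * ∑ i, M i * (x.2.1 i) ^ 2

def constrainedKineticEnergy (M : Fin (m+k) → ℝ) (α : Fin k → Pt m k → ℝ) (x : Pt m k) : ℝ :=
  (1/2) * ∑ r : Fin m, M (Fin.castAdd k r) * (x.2.1 r) ^ 2
    + (1/2) * ∑ ν : Fin k, M (Fin.natAdd m ν) * (α ν x) ^ 2

theorem pv_kineticEnergy {n n' : ℕ} (M : Fin n' → ℝ) (j : Fin n')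
    (x : (Fin n → ℝ) × (Fin n' → ℝ) × ℝ) :
    pv (kineticEnergy M) j x = M j * x.2.1 j := by
  unfold pv kineticEnergy
  rw [fderiv_half_sum_sq_apply M (fun i => by fun_prop)]
  simp [fderiv_velocity_apply, Pi.single_apply]

section constrained

variable (M : Fin (m+k) → ℝ) {α : Fin k → Pt m k → ℝ}

theorem fderiv_constrainedKineticEnergy_apply (hα : ∀ ν, Differentiable ℝ (α ν))
    (x h : Pt m k) :
    fderiv ℝ (constrainedKineticEnergy M α) x h
      = ∑ r : Fin m, M (Fin.castAdd k r) * (x.2.1 r * h.2.1 r)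
        + ∑ ν : Fin k, M (Fin.natAdd m ν) * (α ν x * fderiv ℝ (α ν) x h) := by
  have hv : ∀ r : Fin m, DifferentiableAt ℝ (fun y : Pt m k => y.2.1 r) x := fun r => by fun_prop
  have hα' : ∀ ν, DifferentiableAt ℝ (α ν) x := fun ν => hα ν x
  unfold constrainedKineticEnergy
  rw [fderiv_fun_add (by fun_prop) (by fun_prop), add_apply,
    fderiv_half_sum_sq_apply _ hv, fderiv_half_sum_sq_apply _ hα']
  simp only [fderiv_velocity_apply]

theorem pv_constrainedKineticEnergy (hα : ∀ ν, Differentiable ℝ (α ν)) (r : Fin m)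
    (x : Pt m k) :
    pv (constrainedKineticEnergy M α) r x
      = M (Fin.castAdd k r) * x.2.1 r
        + ∑ ν : Fin k, M (Fin.natAdd m ν) * (α ν x * pv (α ν) r x) := by
  rw [pv, fderiv_constrainedKineticEnergy_apply M hα]
  simp [Pi.single_apply, pv]

theorem pq_constrainedKineticEnergy (hα : ∀ ν, Differentiable ℝ (α ν)) (i : Fin (m+k))
    (x : Pt m k) :
    pq (constrainedKineticEnergy M α) i x
      = ∑ ν : Fin k, M (Fin.natAdd m ν) * (α ν x * pq (α ν) i x) := by
  rw [pq, fderiv_constrainedKineticEnergy_apply M hα]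
  simp [pq]

theorem deriv_pv_constrainedKineticEnergy_along (hα : ∀ ν, ContDiff ℝ 2 (α ν))
    {q : ℝ → Fin (m+k) → ℝ} (hq : ContDiff ℝ 2 q) (r : Fin m) (t : ℝ) :
    deriv (fun s => pv (constrainedKineticEnergy M α) r (along m k q s)) t
      = M (Fin.castAdd k r) * deriv (fun s => qdot q s (Fin.castAdd k r)) t
        + ∑ ν : Fin k, M (Fin.natAdd m ν) *
            (deriv (fun s => α ν (along m k q s)) t * pv (α ν) r (along m k q t)
              + α ν (along m k q t) * deriv (fun s => pv (α ν) r (along m k q s)) t) := by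
  have hdiff : ∀ {f : Pt m k → ℝ}, ContDiff ℝ 1 f →
      HasDerivAt (fun s => f (along m k q s)) (deriv (fun s => f (along m k q s)) t) t :=
    fun hf => ((hf.comp (contDiff_along hq)).differentiable one_ne_zero t).hasDerivAt
  have hv : HasDerivAt (fun s => qdot q s (Fin.castAdd k r))
      (deriv (fun s => qdot q s (Fin.castAdd k r)) t) t :=
    ((contDiff_qdot hq _).differentiable one_ne_zero t).hasDerivAt
  simp_rw [pv_constrainedKineticEnergy M (fun ν => (hα ν).differentiable two_ne_zero)]
  exact ((hv.const_mul _).add (HasDerivAt.fun_sum fun ν _ =>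
    ((hdiff ((hα ν).of_le one_le_two)).mul (hdiff (contDiff_pv (hα ν) r))).const_mul _)).deriv

end constrained

/-- Read `c = M_{m+·}`, `A = α`, `P = ∂α/∂v_r`, `Qc = ∂α/∂q_r`, `Q ν μ = ∂α_ν/∂q_{m+μ}`, primes
for time derivatives; the last sum is then the `B`-term. -/
theorem voronec_cancellation {R ι : Type*} [CommRing R] [Fintype ι]
    (c A A' P P' Qc : ι → R) (Q : ι → ι → R) :
    ∑ ν, c ν * (A' ν * P ν + A ν * P' ν) - ∑ ν, c ν * (A ν * Qc ν)
      - ∑ ν, (∑ μ, c μ * (A μ * Q μ ν)) * P ν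
      - ∑ ν, (P' ν - Qc ν - ∑ μ, P μ * Q ν μ) * (c ν * A ν)
      = ∑ ν, c ν * P ν * A' ν := by
  have hswap : ∑ ν, (∑ μ, c μ * (A μ * Q μ ν)) * P ν
      = ∑ ν, (∑ μ, P μ * Q ν μ) * (c ν * A ν) := by
    simp only [Finset.sum_mul]
    rw [Finset.sum_comm]
    exact Finset.sum_congr rfl fun ν _ => Finset.sum_congr rfl fun μ _ => by ring
  rw [hswap, ← Finset.sum_sub_distrib, ← Finset.sum_sub_distrib, ← Finset.sum_sub_distrib]
  exact Finset.sum_congr rfl fun ν _ => by ring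

theorem voronec_lhs_kineticEnergy (M : Fin (m+k) → ℝ) {α : Fin k → Pt m k → ℝ}
    (hα : ∀ ν, ContDiff ℝ 2 (α ν)) {q : ℝ → Fin (m+k) → ℝ} (hq : ContDiff ℝ 2 q)
    (r : Fin m) (t : ℝ) :
    deriv (fun s => pv (constrainedKineticEnergy M α) r (along m k q s)) t
        - pq (constrainedKineticEnergy M α) (Fin.castAdd k r) (along m k q t)
        - ∑ ν : Fin k, pq (constrainedKineticEnergy M α) (Fin.natAdd m ν) (along m k q t)
            * pv (α ν) r (along m k q t)
        - ∑ ν : Fin k, Bco α q r ν t * pv (kineticEnergy M) (Fin.natAdd m ν)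
            (Lpt α (along m k q t))
      = M (Fin.castAdd k r) * deriv (fun s => qdot q s (Fin.castAdd k r)) t
        + ∑ ν : Fin k, M (Fin.natAdd m ν) * pv (α ν) r (along m k q t)
            * deriv (fun s => α ν (along m k q s)) t := by
  have hα₁ : ∀ ν, Differentiable ℝ (α ν) := fun ν => (hα ν).differentiable two_ne_zero
  have hu : ∀ ν, uhat α (along m k q t) (Fin.natAdd m ν) = α ν (along m k q t) :=
    fun ν => Fin.append_right _ _ ν
  simp only [deriv_pv_constrainedKineticEnergy_along M hα hq, pq_constrainedKineticEnergy M hα₁,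
    pv_kineticEnergy, Lpt, hu, Bco]
  linear_combination voronec_cancellation (fun ν => M (Fin.natAdd m ν))
    (fun ν => α ν (along m k q t)) (fun ν => deriv (fun s => α ν (along m k q s)) t)
    (fun ν => pv (α ν) r (along m k q t)) (fun ν => deriv (fun s => pv (α ν) r (along m k q s)) t)
    (fun ν => pq (α ν) (Fin.castAdd k r) (along m k q t))
    (fun ν μ => pq (α ν) (Fin.natAdd m μ) (along m k q t))

theorem pointmass_Voronec_iff_reduced_general (m k : ℕ)
    (M : Fin (m+k) → ℝ)
    (F : Fin (m+k) → (Fin (m+k) → ℝ) × ℝ → ℝ)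
    (T : PtL m k → ℝ)
    (hT : ∀ x : PtL m k, T x = (1/2) * ∑ i : Fin (m+k), M i * (x.2.1 i) ^ 2)
    (α : Fin k → Pt m k → ℝ) (hα : ∀ ν, ContDiff ℝ 2 (α ν))
    (Tst : Pt m k → ℝ)
    (hTst : ∀ x : Pt m k,
      Tst x = (1/2) * ∑ r : Fin m, M (Fin.castAdd k r) * (x.2.1 r) ^ 2
        + (1/2) * ∑ ν : Fin k, M (Fin.natAdd m ν) * (α ν x) ^ 2)
    (q : ℝ → Fin (m+k) → ℝ) (hq : ContDiff ℝ 2 q)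
 :
    (∀ (r : Fin m) (t : ℝ),
      deriv (fun s => pv Tst r (along m k q s)) t
        - pq Tst (Fin.castAdd k r) (along m k q t)
        - ∑ ν : Fin k, pq Tst (Fin.natAdd m ν) (along m k q t) * pv (α ν) r (along m k q t)
        - ∑ ν : Fin k, Bco α q r ν t * pv T (Fin.natAdd m ν) (Lpt α (along m k q t))
      = F (Fin.castAdd k r) (q t, t)
        + ∑ ν : Fin k, pv (α ν) r (along m k q t) * F (Fin.natAdd m ν) (q t, t))
    ↔ (∀ (r : Fin m) (t : ℝ),
      M (Fin.castAdd k r) * deriv (fun s => qdot q s (Fin.castAdd k r)) t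
        + ∑ ν : Fin k, M (Fin.natAdd m ν) * pv (α ν) r (along m k q t)
            * deriv (fun s => α ν (along m k q s)) t
      = F (Fin.castAdd k r) (q t, t)
        + ∑ ν : Fin k, pv (α ν) r (along m k q t) * F (Fin.natAdd m ν) (q t, t)) := by
  obtain rfl : T = kineticEnergy M := funext hT
  obtain rfl : Tst = constrainedKineticEnergy M α := funext hTst
  simp only [voronec_lhs_kineticEnergy M hα hq]

theorem pointmass_Voronec_iff_reduced (m k : ℕ) (hm : 0 < m) (hk : 0 < k)
    (M : Fin (m+k) → ℝ) (hM : ∀ i, 0 < M i)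
    (F : Fin (m+k) → (Fin (m+k) → ℝ) × ℝ → ℝ)
    (T : PtL m k → ℝ)
    (hT : ∀ x : PtL m k, T x = (1/2) * ∑ i : Fin (m+k), M i * (x.2.1 i) ^ 2)
    (α : Fin k → Pt m k → ℝ) (hα : ∀ ν, ContDiff ℝ 2 (α ν))
    (Tst : Pt m k → ℝ)
    (hTst : ∀ x : Pt m k,
      Tst x = (1/2) * ∑ r : Fin m, M (Fin.castAdd k r) * (x.2.1 r) ^ 2
        + (1/2) * ∑ ν : Fin k, M (Fin.natAdd m ν) * (α ν x) ^ 2)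
    (q : ℝ → Fin (m+k) → ℝ) (hq : ContDiff ℝ 2 q)
    (hcon : Constrained α q)
 :
    (∀ (r : Fin m) (t : ℝ),
      deriv (fun s => pv Tst r (along m k q s)) t
        - pq Tst (Fin.castAdd k r) (along m k q t)
        - ∑ ν : Fin k, pq Tst (Fin.natAdd m ν) (along m k q t) * pv (α ν) r (along m k q t)
        - ∑ ν : Fin k, Bco α q r ν t * pv T (Fin.natAdd m ν) (Lpt α (along m k q t))
      = F (Fin.castAdd k r) (q t, t)
        + ∑ ν : Fin k, pv (α ν) r (along m k q t) * F (Fin.natAdd m ν) (q t, t))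
    ↔ (∀ (r : Fin m) (t : ℝ),
      M (Fin.castAdd k r) * deriv (fun s => qdot q s (Fin.castAdd k r)) t
        + ∑ ν : Fin k, M (Fin.natAdd m ν) * pv (α ν) r (along m k q t)
            * deriv (fun s => α ν (along m k q s)) t
      = F (Fin.castAdd k r) (q t, t)
        + ∑ ν : Fin k, pv (α ν) r (along m k q t) * F (Fin.natAdd m ν) (q t, t)) :=
  pointmass_Voronec_iff_reduced_general m k M F T hT α hα Tst hTst q hq

end NH
end
end
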